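/- The limit as t → 1⁻ of (1-t)² · ∑_{n=0}^∞ (2ⁿ + 1) t^{2ⁿ} equals 0. -/
import Mathlib

open Finset Filter

lemma key_ineq {t : ℝ} (ht0 : 0 ≤ t) (ht1 : t ≤ 1) (m : ℕ) :
    (1 - t) * m * t ^ m ≤ 1 - t ^ m := by
  have h1 : (m : ℝ) * t ^ m ≤ ∑ i ∈ range m, t ^ i := by
    calc (m : ℝ) * t ^ m = ∑ _i ∈ range m, t ^ m := by
          simp [mul_comm]
      _ ≤ ∑ i ∈ range m, t ^ i := by
          apply Finset.sum_le_sum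
          intro i hi
          exact pow_le_pow_of_le_one ht0 ht1 (Finset.mem_range.1 hi).le
  have h2 : (1 - t) * ∑ i ∈ range m, t ^ i = 1 - t ^ m := by
    have := geom_sum_mul t m
    nlinarith [this]
  have h3 := mul_le_mul_of_nonneg_left h1 (by linarith : (0:ℝ) ≤ 1 - t)
  nlinarith [h3, h2]

lemma term_ineq {t : ℝ} (ht0 : 0 ≤ t) (ht1 : t ≤ 1) (n : ℕ) :
    (1 - t) * ((2:ℝ) ^ (n+1) * t ^ 2 ^ (n+1)) ≤ 2 * (t ^ 2 ^ n - t ^ 2 ^ (n+1)) := by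
  have h2m : (2:ℕ) ^ (n+1) = 2 ^ n + 2 ^ n := by rw [pow_succ]; ring
  have htm : t ^ 2 ^ (n+1) = t ^ 2 ^ n * t ^ 2 ^ n := by rw [h2m, pow_add]
  have h2r : (2:ℝ) ^ (n+1) = 2 * (2:ℝ) ^ n := by rw [pow_succ]; ring
  have hk := key_ineq ht0 ht1 (2 ^ n)
  have hcast : ((2 ^ n : ℕ) : ℝ) = (2:ℝ) ^ n := by push_cast; ring
  rw [hcast] at hk
  have h0 : 0 ≤ t ^ 2 ^ n := pow_nonneg ht0 _
  have h3 := mul_le_mul_of_nonneg_left hk h0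
  rw [htm, h2r]
  nlinarith [h3]

lemma partial_aux {t : ℝ} (ht0 : 0 ≤ t) (ht1 : t ≤ 1) :
    ∀ N, ∑ n ∈ range (N+1), (1 - t) * ((2:ℝ) ^ n * t ^ 2 ^ n)
      ≤ (1 - t) * t + 2 * (t - t ^ 2 ^ N) := by
  intro N
  induction N with
  | zero => simp
  | succ N ih =>
      rw [Finset.sum_range_succ]
      have h := term_ineq ht0 ht1 N
      nlinarith [h, ih]

lemma tsum_bound {t : ℝ} (ht : t ∈ Set.Ioo (0:ℝ) 1) :
    ∑' n : ℕ, ((2:ℝ) ^ n + 1) * t ^ 2 ^ n ≤ 6 / (1 - t) := by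
  obtain ⟨ht0, ht1⟩ := ht
  have h1t : (0:ℝ) < 1 - t := by linarith
  have hpart : ∀ N, ∑ n ∈ range N, ((2:ℝ) ^ n + 1) * t ^ 2 ^ n ≤ 6 / (1 - t) := by
    intro N
    rw [le_div_iff₀ h1t]
    have hb : ∑ n ∈ range N, (1 - t) * ((2:ℝ) ^ n * t ^ 2 ^ n) ≤ 3 := by
      cases N with
      | zero => simp
      | succ M =>
          have h := partial_aux ht0.le ht1.le M
          have h0 : 0 ≤ t ^ 2 ^ M := pow_nonneg ht0.le _
          nlinarith [h, h0]
    have hcmp : ∑ n ∈ range N, ((2:ℝ) ^ n + 1) * t ^ 2 ^ n * (1 - t)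
        ≤ ∑ n ∈ range N, 2 * ((1 - t) * ((2:ℝ) ^ n * t ^ 2 ^ n)) := by
      apply Finset.sum_le_sum
      intro n _
      have h1 : (2:ℝ) ^ n + 1 ≤ 2 * 2 ^ n := by
        have : (1:ℝ) ≤ 2 ^ n := one_le_pow₀ (by norm_num : (1:ℝ) ≤ 2)
        linarith
      have h2 : 0 ≤ t ^ 2 ^ n * (1 - t) := by positivity
      nlinarith [mul_le_mul_of_nonneg_right h1 h2]
    calc (∑ n ∈ range N, ((2:ℝ) ^ n + 1) * t ^ 2 ^ n) * (1 - t)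
        = ∑ n ∈ range N, ((2:ℝ) ^ n + 1) * t ^ 2 ^ n * (1 - t) := by
          rw [Finset.sum_mul]
      _ ≤ ∑ n ∈ range N, 2 * ((1 - t) * ((2:ℝ) ^ n * t ^ 2 ^ n)) := hcmp
      _ = 2 * ∑ n ∈ range N, (1 - t) * ((2:ℝ) ^ n * t ^ 2 ^ n) := by
          rw [Finset.mul_sum]
      _ ≤ 2 * 3 := by linarith
      _ = 6 := by norm_num
  have hsummable : Summable fun n : ℕ => ((2:ℝ) ^ n + 1) * t ^ 2 ^ n :=
    summable_of_sum_range_le (fun n => by positivity) hpart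
  exact Summable.tsum_le_of_sum_range_le hsummable hpart

theorem limit_one_sub_t_sq_mul_lacunary_sum :
    Filter.Tendsto (fun t : ℝ => (1 - t) ^ 2 * ∑' n : ℕ, ((2 : ℝ) ^ n + 1) * t ^ (2 ^ n))
      (nhdsWithin 1 (Set.Ioo (0 : ℝ) 1)) (nhds 0) := by
  have hup : Tendsto (fun t : ℝ => 6 * (1 - t)) (nhdsWithin 1 (Set.Ioo (0:ℝ) 1)) (nhds 0) := by
    have h : Tendsto (fun t : ℝ => 6 * (1 - t)) (nhds 1) (nhds (6 * (1 - 1))) := by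
      exact (tendsto_const_nhds.mul (tendsto_const_nhds.sub tendsto_id))
    simpa using h.mono_left nhdsWithin_le_nhds
  apply tendsto_of_tendsto_of_tendsto_of_le_of_le' tendsto_const_nhds hup
  · filter_upwards [self_mem_nhdsWithin] with t ht
    have h1 : (0:ℝ) ≤ (1 - t) ^ 2 := sq_nonneg _
    have h2 : (0:ℝ) ≤ ∑' n : ℕ, ((2 : ℝ) ^ n + 1) * t ^ (2 ^ n) := by
      apply tsum_nonneg
      intro n
      have := ht.1
      positivity
    positivity
  · filter_upwards [self_mem_nhdsWithin] with t ht
    have h1t : (0:ℝ) < 1 - t := by linarith [ht.2]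
    have hb := tsum_bound ht
    calc (1 - t) ^ 2 * ∑' n : ℕ, ((2 : ℝ) ^ n + 1) * t ^ (2 ^ n)
        ≤ (1 - t) ^ 2 * (6 / (1 - t)) := by
          apply mul_le_mul_of_nonneg_left hb (by positivity)
      _ = 6 * (1 - t) := by field_simp
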